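/- arXiv:1806.03802 — 2 statements merged into one kernel-verified Lean document; each statement's English description precedes it below -/
import Mathlib

section
/- For any weak composition a, the glide polynomial satisfies the decomposition F̄_a = Σ_b P̄_b, where the sum is over all weak compositions b with b ≥ a in dominance order and b⁺ = a⁺, and P̄_b denotes the kaon generating function over mesonic glides of b. -/
abbrev Komp : Type := List (ℕ × Bool)

def kex (g : Komp) : ℕ := (g.filter (fun p => p.2)).length

def kval (g : Komp) : List ℕ := g.map Prod.fst

def toKomp (a : List ℕ) : Komp := a.map (fun v => (v, false))

inductive GlideMove : Komp → Komp → Prop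
  | m1 (l r : Komp) (p : ℕ) (c : Bool) (hp : 0 < p) :
      GlideMove (l ++ (0, false) :: (p, c) :: r) (l ++ (p, c) :: (0, false) :: r)
  | m2 (l r : Komp) (p q s : ℕ) (c : Bool) (hq : 0 < q) (hs : 0 < s) (h : q + s = p) :
      GlideMove (l ++ (0, false) :: (p, c) :: r) (l ++ (q, c) :: (s, false) :: r)
  | m3 (l r : Komp) (p q s : ℕ) (c : Bool) (hq : 0 < q) (hs : 0 < s) (h : q + s = p + 1) :
      GlideMove (l ++ (0, false) :: (p, c) :: r) (l ++ (q, c) :: (s, true) :: r)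

def IsGlide (a : List ℕ) (g : Komp) : Prop :=
  Relation.ReflTransGen GlideMove (toKomp a) g

def BlackFirst (seg : Komp) : Prop :=
  ∀ p ∈ (seg.dropWhile fun q => q.1 == 0).head?, p.2 = false

def IsBlock (v : ℕ) (seg : Komp) : Prop :=
  (kval seg).sum = v + kex seg ∧
  (∀ p ∈ seg, p.2 = true → 0 < p.1) ∧
  BlackFirst seg ∧
  (∀ p ∈ seg.getLast?, p.1 ≠ 0)

inductive MesonicGlide : List ℕ → Komp → Prop
  | zeros (k : ℕ) :
      MesonicGlide (List.replicate k 0) (List.replicate k ((0 : ℕ), false))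
  | block (z v : ℕ) (hv : 0 < v) (seg : Komp) (a' : List ℕ) (g' : Komp)
      (hlen : seg.length = z + 1) (hseg : IsBlock v seg)
      (h : MesonicGlide a' g') :
      MesonicGlide (List.replicate z 0 ++ v :: a') (seg ++ g')
def Dominates (b a : List ℕ) : Prop :=
  b.length = a.length ∧ ∀ i : ℕ, (a.take i).sum ≤ (b.take i).sum

def posPart (a : List ℕ) : List ℕ := a.filter (fun v => v != 0)
noncomputable def xmonoPos (w : List ℕ) : MvPolynomial ℕ (Polynomial ℤ) :=
  ∏ i ∈ Finset.range w.length, MvPolynomial.X (i + 1) ^ w.getD i 0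

noncomputable def glidePoly (a : List ℕ) : MvPolynomial ℕ (Polynomial ℤ) :=
  ∑ᶠ g ∈ {g : Komp | IsGlide a g},
    MvPolynomial.C (Polynomial.X ^ kex g) * xmonoPos (kval g)

noncomputable def kaonPoly (b : List ℕ) : MvPolynomial ℕ (Polynomial ℤ) :=
  ∑ᶠ g ∈ {g : Komp | MesonicGlide b g},
    MvPolynomial.C (Polynomial.X ^ kex g) * xmonoPos (kval g)

/-!
The glides of `a` are the disjoint union, over all `b ≥ a` with `b⁺ = a⁺`, of the mesonic glides
of `b`; the identity follows by summing the weights over this partition.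

A mesonic glide of `b` is a glide of `a`: `b` is reached from `a` by sliding nonzero entries to
the left with (m.1), and a block `0 … 0 v` of `b` glides into any block of value `v` by splitting
the entry `v` with (m.2)/(m.3) and sliding zeros to the right with (m.1). Conversely, mesonic
glides of such `b` are closed under moves: a move stays inside one block, except an (m.1) move
across the end of a block, which hands a zero over to the next block and replaces `b` by a larger
composition with the same positive part. Finally a mesonic glide determines `b` once `b⁺` is
known: a block cannot be extended by a nonempty segment of value `0`, because the first nonzero
entry of such a segment is red, whereas every mesonic glide starts with a black nonzero entry.
-/

open Relation List

theorem sum_take_replicate_zero_append (k i : ℕ) (l : List ℕ) :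
    ((replicate k 0 ++ l).take i).sum = (l.take (i - k)).sum := by
  simp [take_append, take_replicate]

namespace Dominates

protected theorem refl (a : List ℕ) : Dominates a a := ⟨rfl, fun _ => le_rfl⟩

protected theorem trans {c b a : List ℕ} (hcb : Dominates c b) (hba : Dominates b a) :
    Dominates c a :=
  ⟨hcb.1.trans hba.1, fun i => (hba.2 i).trans (hcb.2 i)⟩

theorem append_left {b a : List ℕ} (c : List ℕ) (h : Dominates b a) :
    Dominates (c ++ b) (c ++ a) := by
  refine ⟨by simp [h.1], fun i => ?_⟩
  simp only [take_append, sum_append]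
  exact Nat.add_le_add_left (h.2 _) _

theorem of_cons {x : ℕ} {b a : List ℕ} (h : Dominates (x :: b) (x :: a)) : Dominates b a :=
  ⟨by simpa using h.1, fun i => by simpa using h.2 (i + 1)⟩

end Dominates

theorem dominates_cons_zero_cons (v : ℕ) (a : List ℕ) :
    Dominates (v :: 0 :: a) (0 :: v :: a) := by
  refine ⟨rfl, fun i => ?_⟩
  rcases i with _ | _ | i <;> simp

theorem dominates_cons_replicate_zero_append {y k : ℕ} {b t : List ℕ}
    (h : Dominates (y :: b) (replicate k 0 ++ y :: t)) :
    Dominates (y :: b) (y :: (replicate k 0 ++ t)) := by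
  refine ⟨by have := h.1; simp at this ⊢; omega, fun i => ?_⟩
  rcases i with _ | i
  · simp
  have hi := h.2 (i + 1)
  rw [sum_take_replicate_zero_append] at hi
  rw [take_succ_cons, sum_cons, sum_take_replicate_zero_append]
  rcases Nat.lt_or_ge i k with hik | hik
  · simp [Nat.sub_eq_zero_of_le hik.le]
  · rwa [Nat.sub_add_comm hik, take_succ_cons, sum_cons] at hi

@[simp]
theorem posPart_cons_zero (a : List ℕ) : _root_.posPart (0 :: a) = _root_.posPart a := by
  simp [_root_.posPart]

theorem posPart_cons_of_ne_zero {v : ℕ} (hv : v ≠ 0) (a : List ℕ) :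
    _root_.posPart (v :: a) = v :: _root_.posPart a := by
  simp [_root_.posPart, hv]

@[simp]
theorem posPart_replicate_zero_append (k : ℕ) (a : List ℕ) :
    _root_.posPart (replicate k 0 ++ a) = _root_.posPart a := by
  induction k <;> simp_all [replicate_succ]

theorem posPart_eq_of_posPart_cons_eq {x : ℕ} {b a : List ℕ}
    (h : _root_.posPart (x :: b) = _root_.posPart (x :: a)) :
    _root_.posPart b = _root_.posPart a := by
  by_cases hx : x = 0
  · simpa [hx] using h
  · simpa [posPart_cons_of_ne_zero hx] using h

theorem exists_eq_replicate_zero_append_of_posPart_eq_cons {a q : List ℕ} {y : ℕ}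
    (h : _root_.posPart a = y :: q) :
    ∃ j t, a = replicate j 0 ++ y :: t ∧ _root_.posPart t = q := by
  induction a with
  | nil => simp [_root_.posPart] at h
  | cons x a ih =>
    by_cases hx : x = 0
    · subst hx
      obtain ⟨j, t, rfl, ht⟩ := ih (by simpa using h)
      exact ⟨j + 1, t, by simp [replicate_succ], ht⟩
    · rw [posPart_cons_of_ne_zero hx] at h
      obtain ⟨rfl, rfl⟩ := cons.inj h
      exact ⟨0, a, rfl, rfl⟩

theorem eq_replicate_zero_of_posPart_eq_nil {b : List ℕ} (h : _root_.posPart b = []) :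
    b = replicate b.length 0 :=
  eq_replicate_iff.2 ⟨rfl, fun x hx => by simpa using filter_eq_nil_iff.1 h x hx⟩

@[simp] theorem kval_nil : kval [] = [] := rfl

@[simp] theorem kval_cons (x : ℕ × Bool) (g : Komp) : kval (x :: g) = x.1 :: kval g := rfl

@[simp] theorem kval_append (g h : Komp) : kval (g ++ h) = kval g ++ kval h := by simp [kval]

@[simp] theorem kex_nil : kex [] = 0 := rfl

@[simp]
theorem kex_cons (x : ℕ × Bool) (g : Komp) : kex (x :: g) = kex g + x.2.toNat := by
  cases h : x.2 <;> simp [kex, h]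

@[simp] theorem kex_append (g h : Komp) : kex (g ++ h) = kex g + kex h := by simp [kex]

@[simp]
theorem toKomp_cons (v : ℕ) (a : List ℕ) : toKomp (v :: a) = (v, false) :: toKomp a := rfl

@[simp]
theorem toKomp_append (a b : List ℕ) : toKomp (a ++ b) = toKomp a ++ toKomp b := by simp [toKomp]

@[simp]
theorem toKomp_replicate (k v : ℕ) : toKomp (replicate k v) = replicate k (v, false) := by
  simp [toKomp]

theorem toNat_snd_le_fst {x : ℕ × Bool} (hx : x.2 = true → 0 < x.1) : x.2.toNat ≤ x.1 := by
  cases h : x.2 <;> simp_all [Nat.one_le_iff_ne_zero, Nat.pos_iff_ne_zero]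

theorem kex_le_sum_kval {g : Komp} (hred : ∀ x ∈ g, x.2 = true → 0 < x.1) :
    kex g ≤ (kval g).sum := by
  induction g with
  | nil => simp
  | cons x g ih =>
    have hx := toNat_snd_le_fst (hred x mem_cons_self)
    simpa [add_comm] using Nat.add_le_add (ih fun y hy => hred y (mem_cons_of_mem _ hy)) hx

theorem snd_eq_true_of_sum_kval_eq_kex {g : Komp} (hred : ∀ x ∈ g, x.2 = true → 0 < x.1)
    (hsum : (kval g).sum = kex g) : ∀ x ∈ g, x.1 ≠ 0 → x.2 = true := by
  induction g with
  | nil => simp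
  | cons x g ih =>
    have hred' : ∀ y ∈ g, y.2 = true → 0 < y.1 := fun y hy => hred y (mem_cons_of_mem _ hy)
    have hle := kex_le_sum_kval hred'
    have hx := toNat_snd_le_fst (hred x mem_cons_self)
    simp only [kval_cons, sum_cons, kex_cons] at hsum
    intro y hy hy0
    rcases mem_cons.1 hy with rfl | hy
    · cases h : y.2
      · simp [h] at hsum
        omega
      · rfl
    · exact ih hred' (by omega) y hy hy0

theorem blackFirst_nil : BlackFirst [] := by simp [BlackFirst]

theorem blackFirst_cons_of_fst_eq_zero {x : ℕ × Bool} (hx : x.1 = 0) (g : Komp) :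
    BlackFirst (x :: g) ↔ BlackFirst g := by
  simp [BlackFirst, hx]

theorem blackFirst_cons_of_fst_ne_zero {x : ℕ × Bool} (hx : x.1 ≠ 0) (g : Komp) :
    BlackFirst (x :: g) ↔ x.2 = false := by
  simp [BlackFirst, hx]

theorem blackFirst_append_congr {g h : Komp} (l : Komp) (hgh : BlackFirst g ↔ BlackFirst h) :
    BlackFirst (l ++ g) ↔ BlackFirst (l ++ h) := by
  induction l with
  | nil => exact hgh
  | cons x l ih =>
    by_cases hx : x.1 = 0
    · simp only [cons_append, blackFirst_cons_of_fst_eq_zero hx, ih]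
    · simp only [cons_append, blackFirst_cons_of_fst_ne_zero hx]

theorem blackFirst_append_of_exists {s : Komp} (hs : ∃ x ∈ s, x.1 ≠ 0) (t : Komp) :
    BlackFirst (s ++ t) ↔ BlackFirst s := by
  induction s with
  | nil => simp at hs
  | cons x s ih =>
    by_cases hx : x.1 = 0
    · obtain ⟨y, hy, hy0⟩ := hs
      have hys : y ∈ s := (mem_cons.1 hy).resolve_left fun hyx => hy0 (hyx ▸ hx)
      simp only [cons_append, blackFirst_cons_of_fst_eq_zero hx, ih ⟨y, hys, hy0⟩]
    · simp only [cons_append, blackFirst_cons_of_fst_ne_zero hx]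

theorem blackFirst_replicate_zero (k : ℕ) : BlackFirst (replicate k (0, false)) := by
  induction k with
  | zero => exact blackFirst_nil
  | succ k ih => rwa [replicate_succ, blackFirst_cons_of_fst_eq_zero rfl]

theorem not_blackFirst_of_forall_snd_eq_true {s : Komp} (hs : ∃ x ∈ s, x.1 ≠ 0)
    (hred : ∀ x ∈ s, x.1 ≠ 0 → x.2 = true) : ¬BlackFirst s := by
  obtain ⟨x, hx, hx0⟩ := hs
  induction s with
  | nil => simp at hx
  | cons y s ih =>
    by_cases hy : y.1 = 0
    · rw [blackFirst_cons_of_fst_eq_zero hy]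
      rcases mem_cons.1 hx with rfl | hx
      · exact absurd hy hx0
      · exact ih (fun z hz => hred z (mem_cons_of_mem _ hz)) hx
    · simp [blackFirst_cons_of_fst_ne_zero hy, hred y mem_cons_self hy]

namespace GlideMove

variable {g h : Komp}

theorem append_left (c : Komp) (m : GlideMove g h) : GlideMove (c ++ g) (c ++ h) := by
  cases m with
  | m1 l r p x hp => simpa using m1 (c ++ l) r p x hp
  | m2 l r p q s x hq hs hqs => simpa using m2 (c ++ l) r p q s x hq hs hqs
  | m3 l r p q s x hq hs hqs => simpa using m3 (c ++ l) r p q s x hq hs hqs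

theorem append_right (d : Komp) (m : GlideMove g h) : GlideMove (g ++ d) (h ++ d) := by
  cases m with
  | m1 l r p x hp => simpa using m1 l (r ++ d) p x hp
  | m2 l r p q s x hq hs hqs => simpa using m2 l (r ++ d) p q s x hq hs hqs
  | m3 l r p q s x hq hs hqs => simpa using m3 l (r ++ d) p q s x hq hs hqs

theorem exists_eq_append (m : GlideMove g h) :
    ∃ l r y x' y', g = l ++ (0, false) :: y :: r ∧ h = l ++ x' :: y' :: r ∧
      GlideMove [(0, false), y] [x', y'] := by
  cases m with
  | m1 l r p x hp => exact ⟨l, r, _, _, _, rfl, rfl, m1 [] [] p x hp⟩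
  | m2 l r p q s x hq hs hqs => exact ⟨l, r, _, _, _, rfl, rfl, m2 [] [] p q s x hq hs hqs⟩
  | m3 l r p q s x hq hs hqs => exact ⟨l, r, _, _, _, rfl, rfl, m3 [] [] p q s x hq hs hqs⟩

theorem of_append {s t u : Komp} (m : GlideMove (s ++ t) u) :
    (∃ s', GlideMove s s' ∧ u = s' ++ t) ∨ (∃ t', GlideMove t t' ∧ u = s ++ t') ∨
      s.getLast? = some (0, false) := by
  obtain ⟨l, r, y, x', y', hst, rfl, hloc⟩ := m.exists_eq_append
  rcases append_eq_append_iff.1 hst with ⟨l₂, rfl, rfl⟩ | ⟨c, rfl, hc⟩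
  · refine .inr (.inl ⟨l₂ ++ x' :: y' :: r, ?_, by simp⟩)
    simpa using (hloc.append_right r).append_left l₂
  · rcases c with _ | ⟨e, _ | ⟨e', r₁⟩⟩
    · rw [nil_append] at hc
      subst hc
      exact .inr (.inl ⟨x' :: y' :: r, by simpa using hloc.append_right r, by simp⟩)
    · obtain ⟨rfl, -⟩ := cons.inj hc
      exact .inr (.inr (by simp))
    · simp only [cons_append, cons.injEq] at hc
      obtain ⟨rfl, rfl, rfl⟩ := hc
      exact .inl ⟨l ++ x' :: y' :: r₁, by simpa using (hloc.append_right r₁).append_left l,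
        by simp⟩

theorem length_eq (m : GlideMove g h) : h.length = g.length := by
  cases m <;> simp

theorem exists_mem_fst_ne_zero (m : GlideMove g h) : ∃ x ∈ g, x.1 ≠ 0 := by
  cases m with
  | m1 l r p c hp => exact ⟨(p, c), by simp, hp.ne'⟩
  | m2 l r p q s c hq hs hqs => exact ⟨(p, c), by simp, by omega⟩
  | m3 l r p q s c hq hs hqs => exact ⟨(p, c), by simp, by omega⟩

theorem sum_kval_add_kex (m : GlideMove g h) : (kval h).sum + kex g = (kval g).sum + kex h := by
  cases m <;> simp <;> omega

theorem red_pos (m : GlideMove g h) (hg : ∀ x ∈ g, x.2 = true → 0 < x.1) :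
    ∀ x ∈ h, x.2 = true → 0 < x.1 := by
  cases m <;> simp only [forall_mem_append, forall_mem_cons] at hg ⊢ <;>
    exact ⟨hg.1, by simp [*], by simp [*], hg.2.2.2⟩

theorem blackFirst_iff (m : GlideMove g h) : BlackFirst h ↔ BlackFirst g := by
  have hzero := blackFirst_cons_of_fst_eq_zero (x := ((0 : ℕ), false)) rfl
  cases m with
  | m1 l r p c hp =>
    refine blackFirst_append_congr l ?_
    rw [hzero, blackFirst_cons_of_fst_ne_zero (x := (p, c)) hp.ne',
      blackFirst_cons_of_fst_ne_zero (x := (p, c)) hp.ne']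
  | m2 l r p q s c hq hs hqs =>
    refine blackFirst_append_congr l ?_
    rw [hzero, blackFirst_cons_of_fst_ne_zero (x := (q, c)) hq.ne',
      blackFirst_cons_of_fst_ne_zero (x := (p, c)) (by omega)]
  | m3 l r p q s c hq hs hqs =>
    refine blackFirst_append_congr l ?_
    rw [hzero, blackFirst_cons_of_fst_ne_zero (x := (q, c)) hq.ne',
      blackFirst_cons_of_fst_ne_zero (x := (p, c)) (by omega)]

theorem getLast?_fst_ne_zero (m : GlideMove g h) (hg : ∀ x ∈ g.getLast?, x.1 ≠ 0) :
    (∀ x ∈ h.getLast?, x.1 ≠ 0) ∨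
      ∃ l x, g = l ++ [(0, false), x] ∧ h = l ++ [x, (0, false)] := by
  cases m with
  | m1 l r p x hp =>
    rcases r with _ | ⟨e, r⟩
    · exact .inr ⟨l, (p, x), rfl, rfl⟩
    · exact .inl (by simpa [getLast?_append] using hg)
  | m2 l r p q s x hq hs hqs =>
    refine .inl ?_
    rcases r with _ | ⟨e, r⟩ <;> simp_all [getLast?_append, hs.ne']
  | m3 l r p q s x hq hs hqs =>
    refine .inl ?_
    rcases r with _ | ⟨e, r⟩ <;> simp_all [getLast?_append, hs.ne']

end GlideMove

theorem isBlock_append_zero_cons_iff {v : ℕ} (l : Komp) {r : Komp} (hr : r ≠ []) :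
    IsBlock v (l ++ (0, false) :: r) ↔ IsBlock v (l ++ r) := by
  have hbf := blackFirst_append_congr l
    (blackFirst_cons_of_fst_eq_zero (x := ((0 : ℕ), false)) rfl r)
  have hlast : (l ++ (0, false) :: r).getLast? = (l ++ r).getLast? := by
    rw [getLast?_append_of_ne_nil _ (cons_ne_nil _ _), getLast?_append_of_ne_nil _ hr]
    obtain ⟨e, r, rfl⟩ := exists_cons_of_ne_nil hr
    simp [getLast?_cons_cons]
  simp [IsBlock, hbf, hlast]

theorem isBlock_singleton {v : ℕ} (hv : 0 < v) : IsBlock v [(v, false)] :=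
  ⟨by simp, by simp, by simp [blackFirst_cons_of_fst_ne_zero (x := (v, false)) hv.ne'],
    by simpa using hv.ne'⟩

theorem IsBlock.exists_mem_fst_ne_zero {v : ℕ} {seg : Komp} (hb : IsBlock v seg)
    (hne : seg ≠ []) : ∃ x ∈ seg, x.1 ≠ 0 :=
  ⟨seg.getLast hne, getLast_mem hne, hb.2.2.2 _ (getLast?_eq_some_getLast hne)⟩

theorem IsBlock.glideMove {v : ℕ} {seg seg' : Komp} (hb : IsBlock v seg)
    (m : GlideMove seg seg') :
    IsBlock v seg' ∨ ∃ l x, seg' = l ++ [x, (0, false)] ∧ IsBlock v (l ++ [x]) := by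
  obtain ⟨hsum, hred, hbf, hlast⟩ := hb
  rcases m.getLast?_fst_ne_zero hlast with hlast' | ⟨l, x, rfl, rfl⟩
  · have := m.sum_kval_add_kex
    exact .inl ⟨by omega, m.red_pos hred, m.blackFirst_iff.2 hbf, hlast'⟩
  · exact .inr ⟨l, x, rfl,
      (isBlock_append_zero_cons_iff l (cons_ne_nil _ _)).1 ⟨hsum, hred, hbf, hlast⟩⟩

theorem reflTransGen_glideMove_append_left {g h : Komp} (c : Komp)
    (hgh : ReflTransGen GlideMove g h) : ReflTransGen GlideMove (c ++ g) (c ++ h) :=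
  hgh.lift (c ++ ·) fun _ _ m => m.append_left c

theorem reflTransGen_glideMove_append_right {g h : Komp} (d : Komp)
    (hgh : ReflTransGen GlideMove g h) : ReflTransGen GlideMove (g ++ d) (h ++ d) :=
  hgh.lift (· ++ d) fun _ _ m => m.append_right d

theorem reflTransGen_glideMove_cons {g h : Komp} (x : ℕ × Bool)
    (hgh : ReflTransGen GlideMove g h) : ReflTransGen GlideMove (x :: g) (x :: h) :=
  reflTransGen_glideMove_append_left [x] hgh

theorem reflTransGen_glideMove_replicate_zero_append {x : ℕ × Bool} (hx : 0 < x.1) (k : ℕ)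
    (r : Komp) :
    ReflTransGen GlideMove (replicate k (0, false) ++ x :: r)
      (x :: (replicate k (0, false) ++ r)) := by
  induction k with
  | zero => rfl
  | succ k ih =>
    rw [replicate_succ, cons_append, cons_append]
    exact (reflTransGen_glideMove_cons _ ih).tail (GlideMove.m1 [] _ x.1 x.2 hx)

theorem reflTransGen_glideMove_cons_of_pos {p v : ℕ} {t : Komp} (hp : 0 < p)
    (hred : ∀ x ∈ t, x.2 = true → 0 < x.1) (hv : p + (kval t).sum = v + kex t) :
    ReflTransGen GlideMove (replicate t.length (0, false) ++ [(v, false)]) ((p, false) :: t) := by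
  induction t generalizing p with
  | nil =>
    obtain rfl : p = v := by simpa using hv
    rfl
  | cons x t ih =>
    obtain ⟨q, c⟩ := x
    have hred' : ∀ y ∈ t, y.2 = true → 0 < y.1 := fun y hy => hred y (mem_cons_of_mem _ hy)
    rw [length_cons, replicate_succ, cons_append]
    rcases Nat.eq_zero_or_pos q with rfl | hq
    · obtain rfl : c = false := by simpa using fun hc => (hred _ mem_cons_self hc).ne'
      exact (reflTransGen_glideMove_cons _ (ih hp hred' (by simpa using hv))).tail
        (GlideMove.m1 [] t p false hp)
    · cases c
      · exact (reflTransGen_glideMove_cons _ (ih (p := p + q) (by omega) hred'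
          (by simp at hv; omega))).tail (GlideMove.m2 [] t (p + q) p q false hp hq rfl)
      · exact (reflTransGen_glideMove_cons _ (ih (p := p + q - 1) (by omega) hred'
          (by simp at hv; omega))).tail (GlideMove.m3 [] t (p + q - 1) p q false hp hq (by omega))

theorem reflTransGen_glideMove_of_isBlock {v z : ℕ} {seg : Komp} (hb : IsBlock v seg)
    (hlen : seg.length = z + 1) :
    ReflTransGen GlideMove (replicate z (0, false) ++ [(v, false)]) seg := by
  induction seg generalizing z with
  | nil => simp at hlen
  | cons x t ih =>
    obtain ⟨q, c⟩ := x
    rcases Nat.eq_zero_or_pos q with rfl | hq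
    · obtain rfl : c = false := by simpa using fun hc => (hb.2.1 _ mem_cons_self hc).ne'
      have ht : t ≠ [] := by
        rintro rfl
        simpa using hb.2.2.2
      rcases z with _ | z
      · exact absurd (length_eq_zero_iff.1 (by simpa using hlen)) ht
      rw [replicate_succ, cons_append]
      exact reflTransGen_glideMove_cons _
        (ih ((isBlock_append_zero_cons_iff [] ht).1 hb) (by simpa using hlen))
    · have hc : c = false := (blackFirst_cons_of_fst_ne_zero (x := (q, c)) hq.ne' t).1 hb.2.2.1
      subst hc
      obtain rfl : z = t.length := by simpa using hlen.symm
      exact reflTransGen_glideMove_cons_of_pos hq (fun y hy => hb.2.1 y (mem_cons_of_mem _ hy))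
        (by simpa [add_comm] using hb.1)

theorem MesonicGlide.reflTransGen {b : List ℕ} {g : Komp} (h : MesonicGlide b g) :
    ReflTransGen GlideMove (toKomp b) g := by
  induction h with
  | zeros k => rw [toKomp_replicate]
  | block z v hv seg a g' hlen hseg _ ih =>
    have hsplit : toKomp (replicate z 0 ++ v :: a) =
        (replicate z (0, false) ++ [(v, false)]) ++ toKomp a := by simp
    rw [hsplit]
    exact (reflTransGen_glideMove_append_right _
      (reflTransGen_glideMove_of_isBlock hseg hlen)).trans (reflTransGen_glideMove_append_left _ ih)

theorem exists_reflTransGen_toKomp_cons {y : ℕ} {b a : List ℕ} (hdom : Dominates (y :: b) a)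
    (hpos : _root_.posPart (y :: b) = _root_.posPart a) :
    ∃ a', ReflTransGen GlideMove (toKomp a) (toKomp (y :: a')) ∧ Dominates b a' ∧
      _root_.posPart b = _root_.posPart a' := by
  obtain ⟨x, a, rfl⟩ := exists_cons_of_length_eq_add_one hdom.1.symm
  by_cases hxy : x = y
  · subst hxy
    exact ⟨a, .refl, hdom.of_cons, posPart_eq_of_posPart_cons_eq hpos⟩
  have hx : x = 0 := by
    by_contra hx
    have hy : y ≠ 0 := by have := hdom.2 1; simp at this; omega
    rw [posPart_cons_of_ne_zero hx, posPart_cons_of_ne_zero hy] at hpos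
    exact hxy (cons.inj hpos).1.symm
  subst hx
  have hy : y ≠ 0 := Ne.symm hxy
  rw [posPart_cons_of_ne_zero hy, posPart_cons_zero] at hpos
  obtain ⟨j, t, rfl, ht⟩ := exists_eq_replicate_zero_append_of_posPart_eq_cons hpos.symm
  refine ⟨replicate (j + 1) 0 ++ t, ?_, ?_, by simpa using ht.symm⟩
  · simpa [replicate_succ] using
      reflTransGen_glideMove_replicate_zero_append (x := (y, false)) (Nat.pos_of_ne_zero hy)
        (j + 1) (toKomp t)
  · exact (dominates_cons_replicate_zero_append (by simpa [replicate_succ] using hdom)).of_cons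

theorem reflTransGen_toKomp_of_dominates {b a : List ℕ} (hdom : Dominates b a)
    (hpos : _root_.posPart b = _root_.posPart a) :
    ReflTransGen GlideMove (toKomp a) (toKomp b) := by
  induction b generalizing a with
  | nil =>
    obtain rfl : a = [] := length_eq_zero_iff.1 hdom.1.symm
    rfl
  | cons y b ih =>
    obtain ⟨a', hreach, hdom', hpos'⟩ := exists_reflTransGen_toKomp_cons hdom hpos
    exact hreach.trans (reflTransGen_glideMove_cons _ (ih hdom' hpos'))

namespace MesonicGlide

variable {b : List ℕ} {g : Komp}

theorem length_eq (h : MesonicGlide b g) : g.length = b.length := by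
  induction h with
  | zeros k => simp
  | block z v _ seg a g' hlen _ _ ih =>
    simp [hlen, ih]
    omega

theorem sum_kval (h : MesonicGlide b g) : (kval g).sum = b.sum + kex g := by
  induction h with
  | zeros k => simp [kval, kex]
  | block z v hv seg a g' hlen hseg h ih =>
    simp [hseg.1, ih]
    omega

theorem cons_zero (h : MesonicGlide b g) : MesonicGlide (0 :: b) ((0, false) :: g) := by
  cases h with
  | zeros k => simpa [replicate_succ] using zeros (k + 1)
  | block z v hv seg a g' hlen hseg h =>
    have hseg' := (isBlock_append_zero_cons_iff [] (ne_nil_of_length_eq_add_one hlen)).2 hseg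
    simpa [replicate_succ] using block (z + 1) v hv _ a g' (by simp [hlen]) hseg' h

theorem blackFirst (h : MesonicGlide b g) : BlackFirst g := by
  induction h with
  | zeros k => exact blackFirst_replicate_zero k
  | block z v hv seg a g' hlen hseg _ _ =>
    exact (blackFirst_append_of_exists
      (hseg.exists_mem_fst_ne_zero (ne_nil_of_length_eq_add_one hlen)) g').2 hseg.2.2.1

end MesonicGlide

theorem mesonicGlide_toKomp (a : List ℕ) : MesonicGlide a (toKomp a) := by
  induction a with
  | nil => exact .zeros 0
  | cons v a ih =>
    rcases Nat.eq_zero_or_pos v with rfl | hv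
    · exact ih.cons_zero
    · exact .block 0 v hv [(v, false)] a _ rfl (isBlock_singleton hv) ih

theorem MesonicGlide.glideMove {b : List ℕ} {g g' : Komp} (h : MesonicGlide b g)
    (m : GlideMove g g') :
    ∃ b', Dominates b' b ∧ _root_.posPart b' = _root_.posPart b ∧ MesonicGlide b' g' := by
  induction h generalizing g' with
  | zeros k =>
    obtain ⟨x, hx, hx0⟩ := m.exists_mem_fst_ne_zero
    exact absurd (by rw [eq_of_mem_replicate hx]) hx0
  | block z v hv seg a g₁ hlen hseg hg₁ ih =>
    rcases m.of_append with ⟨seg', m', rfl⟩ | ⟨g₁', m', rfl⟩ | hlast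
    · rcases hseg.glideMove m' with hseg' | ⟨l, x, rfl, hblock⟩
      · exact ⟨_, .refl _, rfl,
          .block z v hv seg' a g₁ (m'.length_eq.trans hlen) hseg' hg₁⟩
      · obtain rfl : z = l.length + 1 := by
          have := m'.length_eq
          simp at this
          omega
        refine ⟨replicate l.length 0 ++ v :: 0 :: a, ?_,
          by simp [posPart_cons_of_ne_zero hv.ne'], ?_⟩
        · simpa [replicate_succ'] using
            (dominates_cons_zero_cons v a).append_left (replicate l.length 0)
        · simpa using MesonicGlide.block l.length v hv (l ++ [x]) (0 :: a) _ (by simp) hblock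
            hg₁.cons_zero
    · obtain ⟨b', hdom, hpos, hb'⟩ := ih m'
      refine ⟨replicate z 0 ++ v :: b', ?_, by simp [posPart_cons_of_ne_zero hv.ne', hpos],
        .block z v hv seg b' g₁' hlen hseg hb'⟩
      have := hdom.append_left (replicate z 0 ++ [v])
      rwa [append_assoc, append_assoc, singleton_append, singleton_append] at this
    · exact absurd (hseg.2.2.2 _ hlast) (by simp)

/-- The segment `t` has value `sum - kex = 0`, so its first nonzero entry is red, whereas the
mesonic glide `t ++ g` starts black. -/
theorem IsBlock.eq_nil_of_append {v : ℕ} {seg t g : Komp} {a : List ℕ} (hb : IsBlock v seg)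
    (hb' : IsBlock v (seg ++ t)) (hg : MesonicGlide a (t ++ g)) : t = [] := by
  by_contra ht
  have hsum : (kval t).sum = kex t := by
    have := hb'.1
    simp only [kval_append, sum_append, kex_append, hb.1] at this
    omega
  have hred : ∀ x ∈ t, x.2 = true → 0 < x.1 := fun x hx => hb'.2.1 x (mem_append_right _ hx)
  have hnz : ∃ x ∈ t, x.1 ≠ 0 :=
    ⟨t.getLast ht, getLast_mem ht,
      hb'.2.2.2 _ (by rw [getLast?_append_of_ne_nil _ ht, getLast?_eq_some_getLast ht]; rfl)⟩
  exact not_blackFirst_of_forall_snd_eq_true hnz (snd_eq_true_of_sum_kval_eq_kex hred hsum)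
    ((blackFirst_append_of_exists hnz g).1 hg.blackFirst)

theorem MesonicGlide.eq_of_posPart_eq {b b' : List ℕ} {g : Komp} (h : MesonicGlide b g)
    (h' : MesonicGlide b' g) (hpos : _root_.posPart b = _root_.posPart b') : b = b' := by
  induction h generalizing b' with
  | zeros k =>
    have hb' : _root_.posPart b' = [] := by
      rw [← hpos]
      simp [_root_.posPart]
    rw [eq_replicate_zero_of_posPart_eq_nil hb', ← h'.length_eq, length_replicate]
  | block z v hv seg a g₁ hlen hseg hg₁ ih =>
    generalize hg : seg ++ g₁ = g at h'
    cases h' with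
    | zeros k =>
      obtain ⟨x, hx, hx0⟩ := hseg.exists_mem_fst_ne_zero (ne_nil_of_length_eq_add_one hlen)
      have : x ∈ replicate k ((0 : ℕ), false) := hg ▸ mem_append_left _ hx
      exact absurd (by rw [eq_of_mem_replicate this]) hx0
    | block z₂ v₂ hv₂ seg₂ a₂ g₂ hlen₂ hseg₂ hg₂ =>
      simp only [posPart_replicate_zero_append, posPart_cons_of_ne_zero hv.ne',
        posPart_cons_of_ne_zero hv₂.ne', cons.injEq] at hpos
      obtain ⟨rfl, hpos⟩ := hpos
      obtain ⟨rfl, rfl⟩ : seg₂ = seg ∧ g₂ = g₁ := by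
        rcases append_eq_append_iff.1 hg with ⟨t, rfl, rfl⟩ | ⟨t, rfl, rfl⟩
        · obtain rfl := hseg.eq_nil_of_append hseg₂ hg₁
          simp
        · obtain rfl := hseg₂.eq_nil_of_append hseg hg₂
          simp
      obtain rfl : z₂ = z := by omega
      rw [ih hg₂ hpos]

theorem finite_setOf_length_eq_forall_mem {α : Type*} {s : Set α} (hs : s.Finite) (n : ℕ) :
    {l : List α | l.length = n ∧ ∀ x ∈ l, x ∈ s}.Finite := by
  have := hs.to_subtype
  refine ((List.finite_length_eq s n).image (map (↑))).subset ?_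
  rintro l ⟨rfl, hl⟩
  lift l to List s using hl
  exact ⟨l, by simp, rfl⟩

theorem finite_setOf_mesonicGlide (b : List ℕ) : {g : Komp | MesonicGlide b g}.Finite := by
  refine (finite_setOf_length_eq_forall_mem
    ((Set.finite_Iic (b.sum + b.length)).prod Set.finite_univ) b.length).subset ?_
  intro g hg
  refine ⟨hg.length_eq, fun x hx => ⟨?_, trivial⟩⟩
  have hx1 : x.1 ≤ (kval g).sum := le_sum_of_mem (mem_map_of_mem hx)
  have hkex : kex g ≤ g.length := length_filter_le _ _
  have := hg.sum_kval
  have := hg.length_eq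
  show x.1 ≤ b.sum + b.length
  omega

theorem finite_setOf_dominates_posPart_eq (a : List ℕ) :
    {b : List ℕ | Dominates b a ∧ _root_.posPart b = _root_.posPart a}.Finite := by
  refine (finite_setOf_length_eq_forall_mem (a.finite_toSet.insert 0) a.length).subset ?_
  rintro b ⟨hdom, hpos⟩
  refine ⟨hdom.1, fun x hx => ?_⟩
  by_cases hx0 : x = 0
  · exact .inl hx0
  · have : x ∈ _root_.posPart a := hpos ▸ mem_filter.2 ⟨hx, by simpa using hx0⟩
    exact .inr (mem_filter.1 this).1

theorem isGlide_iff_exists_mesonicGlide {a : List ℕ} {g : Komp} :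
    IsGlide a g ↔
      ∃ b, (Dominates b a ∧ _root_.posPart b = _root_.posPart a) ∧ MesonicGlide b g := by
  constructor
  · intro h
    induction h with
    | refl => exact ⟨a, ⟨.refl a, rfl⟩, mesonicGlide_toKomp a⟩
    | tail _ m ih =>
      obtain ⟨b, ⟨hdom, hpos⟩, hb⟩ := ih
      obtain ⟨b', hdom', hpos', hb'⟩ := hb.glideMove m
      exact ⟨b', ⟨hdom'.trans hdom, hpos'.trans hpos⟩, hb'⟩
  · rintro ⟨b, ⟨hdom, hpos⟩, hb⟩
    exact (reflTransGen_toKomp_of_dominates hdom hpos).trans hb.reflTransGen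

theorem stmt1 (a : List ℕ) :
    glidePoly a =
      ∑ᶠ b ∈ {b : List ℕ | Dominates b a ∧ posPart b = posPart a}, kaonPoly b := by
  have hunion : {g | IsGlide a g} =
      ⋃ b ∈ {b : List ℕ | Dominates b a ∧ _root_.posPart b = _root_.posPart a},
        {g | MesonicGlide b g} := by
    ext g
    simp only [Set.mem_ofPred_eq, Set.mem_iUnion, isGlide_iff_exists_mesonicGlide, exists_prop]
  have hdisj :
      {b : List ℕ | Dominates b a ∧ _root_.posPart b = _root_.posPart a}.PairwiseDisjoint
        fun b => {g | MesonicGlide b g} := fun b hb b' hb' hne =>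
    Set.disjoint_left.2 fun g hg hg' => hne (hg.eq_of_posPart_eq hg' (hb.2.trans hb'.2.symm))
  rw [glidePoly, hunion, finsum_mem_biUnion hdisj (finite_setOf_dominates_posPart_eq a)
    fun b _ => finite_setOf_mesonicGlide b]
  rfl
end

section
/- For any weak composition a, there is a weight-preserving bijection between QLSSF(a) (set-valued quasi-skyline fillings of shape a) and the disjoint union of LASSF(b) (semistandard set-valued skyline fillings of shape b) over all weak compositions b with b ≥ a in dominance order and b⁺ = a⁺; consequently Q̄_a = Σ_{S ∈ QLSSF(a)} β^{|S|−|a|} x^{wt(S)}. -/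
def skyline (a : List ℕ) : Finset (ℕ × ℕ) :=
  (Finset.range a.length).biUnion fun i =>
    (Finset.range (a.getD i 0)).image fun j => (i + 1, j + 1)
abbrev SVF : Type := ℕ → ℕ → Finset ℕ

def shapeLen (b : List ℕ) (i : ℕ) : ℕ := b.getD (i - 1) 0

def SBox (b : List ℕ) (i j : ℕ) : Prop :=
  1 ≤ i ∧ i ≤ b.length ∧ 1 ≤ j ∧ j ≤ shapeLen b i

def anc (F : SVF) (i j : ℕ) : ℕ := (F i j).sup id

noncomputable def infv (F : SVF) (i j : ℕ) : ℕ := sInf (F i j : Set ℕ)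

def InvTriple (be al ga : ℕ) : Prop := (ga < al ∧ al ≤ be) ∨ (al ≤ be ∧ be < ga)

def RowOK (b : List ℕ) (F : SVF) (i j v : ℕ) : Prop :=
  (j = 1 ∨ v ≤ infv F i (j - 1)) ∧ (¬ SBox b i (j + 1) ∨ anc F i (j + 1) ≤ v)

def SVSSF (b : List ℕ) (F : SVF) : Prop :=
  (∀ i j, (F i j).Nonempty ↔ SBox b i j) ∧
  (∀ i j v, v ∈ F i j → 0 < v) ∧
  (∀ j i i', i ≠ i' → ∀ v, v ∈ F i j → v ∉ F i' j) ∧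
  (∀ i j, SBox b i j → SBox b i (j + 1) → anc F i (j + 1) ≤ infv F i j) ∧
  (∀ i i' j, i < i' → SBox b i j → SBox b i (j + 1) → SBox b i' (j + 1) →
      shapeLen b i' ≤ shapeLen b i → InvTriple (anc F i j) (anc F i (j + 1)) (anc F i' (j + 1))) ∧
  (∀ i i' j, i < i' → SBox b i' j → SBox b i' (j + 1) → SBox b i j →
      shapeLen b i < shapeLen b i' → InvTriple (anc F i' j) (anc F i' (j + 1)) (anc F i j)) ∧
  (∀ i j v, SBox b i j → v ∈ F i j → v ≠ anc F i j →
      ∀ i', SBox b i' j → anc F i' j < anc F i j → v < anc F i' j → ¬ RowOK b F i' j v)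

def LASSF (b : List ℕ) (F : SVF) : Prop :=
  SVSSF b F ∧ ∀ i, SBox b i 1 → anc F i 1 = i

def wtF (b : List ℕ) (F : SVF) (v : ℕ) : ℕ :=
  ((skyline b).filter fun p => v ∈ F p.1 p.2).card

def sizeF (b : List ℕ) (F : SVF) : ℕ := ∑ p ∈ skyline b, (F p.1 p.2).card
noncomputable def vmono (w : ℕ → ℕ) : MvPolynomial ℕ (Polynomial ℤ) :=
  ∏ᶠ v, MvPolynomial.X v ^ w v

noncomputable def atomPoly (b : List ℕ) : MvPolynomial ℕ (Polynomial ℤ) :=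
  ∑ᶠ F ∈ {F : SVF | LASSF b F},
    MvPolynomial.C (Polynomial.X ^ (sizeF b F - b.sum)) * vmono (wtF b F)

noncomputable def quasiLascoux (a : List ℕ) : MvPolynomial ℕ (Polynomial ℤ) :=
  ∑ᶠ b ∈ {b : List ℕ | Dominates b a ∧ posPart b = posPart a}, atomPoly b

def QLSSF (b : List ℕ) (F : SVF) : Prop :=
  SVSSF b F ∧ (∀ i, SBox b i 1 → anc F i 1 ≤ i) ∧
    ∀ i i', SBox b i 1 → SBox b i' 1 → i < i' → anc F i 1 < anc F i' 1

/-
In a QLSSF filling `F` of shape `a` the first-column anchors of the nonempty rows increase strictly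
with the row index, and each is at most its row index. Moving the part in row `i` to row
`anc F i 1` therefore produces a shape `b` with the same nonzero parts in the same order; `b`
dominates `a` because no part moves to a larger row index, and the moved filling satisfies (S.5).
Conversely, dominance forces the `k`-th nonempty row of `b` to have index at most that of the `k`-th
nonempty row of `a` (compare the prefix sums ending at the latter), so pulling an LASSF filling of
`b` back along this matching of nonempty rows gives a QLSSF filling of `a`. Since the matching is
order preserving and keeps row lengths, the conditions (S.1)–(S.4), the weight and the size all
survive the move, and summing over the bijection gives the expansion of the quasi-Lascoux
polynomial.
-/

section NonzeroEntries

def entry (l : List ℕ) (k : ℕ) : ℕ := l.getD k 0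

def nonzeroIndices (l : List ℕ) : List ℕ := (List.range l.length).filter fun k => entry l k != 0

variable {l : List ℕ} {k : ℕ}

lemma mem_nonzeroIndices : k ∈ nonzeroIndices l ↔ k < l.length ∧ entry l k ≠ 0 := by
  simp [nonzeroIndices]

lemma sortedLT_nonzeroIndices (l : List ℕ) : (nonzeroIndices l).SortedLT :=
  (List.pairwise_lt_range.sublist List.filter_sublist).sortedLT

lemma entry_eq_getElem (h : k < l.length) : entry l k = l[k] := List.getD_eq_getElem l 0 h

lemma map_entry_range (l : List ℕ) : (List.range l.length).map (entry l) = l :=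
  List.ext_getElem (by simp) fun _ h _ => by simp [entry_eq_getElem (by simpa using h)]

lemma posPart_eq_map_entry (l : List ℕ) : posPart l = (nonzeroIndices l).map (entry l) := by
  conv_lhs => rw [← map_entry_range l]
  rw [_root_.posPart, List.filter_map]
  rfl

lemma sum_posPart (l : List ℕ) : (posPart l).sum = l.sum := by
  induction l with
  | nil => rfl
  | cons x t ih => by_cases h : x = 0 <;> simp_all [_root_.posPart]

lemma sum_map_filter_ne_zero (r : List ℕ) (f : ℕ → ℕ) :
    ((r.filter fun k => f k != 0).map f).sum = (r.map f).sum := by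
  induction r with
  | nil => rfl
  | cons x r ih => by_cases h : f x = 0 <;> simp [h, ih]

lemma filter_range_lt (n N : ℕ) : (List.range n).filter (· < N) = List.range (min N n) := by
  induction n with
  | zero => simp
  | succ n ih =>
    rw [List.range_succ, List.filter_append, ih]
    by_cases h : n < N
    · simp [h, List.range_succ, Nat.min_eq_right h.le]
    · simp [h, show min N (n + 1) = min N n by omega]

lemma sum_take_eq_sum_nonzeroIndices (l : List ℕ) (N : ℕ) :
    (l.take N).sum = (((nonzeroIndices l).filter (· < N)).map (entry l)).sum := by
  conv_lhs => rw [← map_entry_range l, ← List.map_take, List.take_range, ← filter_range_lt,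
    ← sum_map_filter_ne_zero]
  rw [nonzeroIndices, List.filter_filter, List.filter_filter]
  simp only [Bool.and_comm]

lemma filter_lt_succ_getElem (hl : l.SortedLT) (hk : k < l.length) :
    l.filter (· < l[k] + 1) = l.take (k + 1) := by
  have htake : (l.take (k + 1)).filter (· < l[k] + 1) = l.take (k + 1) := by
    refine List.filter_eq_self.mpr fun x hx => ?_
    obtain ⟨i, hi, rfl⟩ := List.mem_iff_getElem.mp hx
    simp only [List.getElem_take, decide_eq_true_eq, Nat.lt_succ_iff]
    exact hl.getElem_le_getElem_iff.mpr (by simp at hi; omega)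
  have hdrop : (l.drop (k + 1)).filter (· < l[k] + 1) = [] := by
    refine List.filter_eq_nil_iff.mpr fun x hx => ?_
    obtain ⟨i, hi, rfl⟩ := List.mem_iff_getElem.mp hx
    simp only [List.getElem_drop, decide_eq_true_eq, not_lt]
    exact Nat.succ_le_of_lt (hl.getElem_lt_getElem_iff.mpr (by omega))
  conv_lhs => arg 2; rw [← List.take_append_drop (k + 1) l]
  rw [List.filter_append, htake, hdrop, List.append_nil]

lemma filter_lt_sublist_take (hl : l.SortedLT) (hk : k < l.length) {N : ℕ} (hN : N ≤ l[k]) :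
    (l.filter (· < N)).Sublist (l.take k) := by
  have hdrop : (l.drop k).filter (· < N) = [] := by
    refine List.filter_eq_nil_iff.mpr fun x hx => ?_
    obtain ⟨i, hi, rfl⟩ := List.mem_iff_getElem.mp hx
    simp only [List.getElem_drop, decide_eq_true_eq, not_lt]
    exact hN.trans (hl.getElem_le_getElem_iff.mpr (by omega))
  conv_lhs => rw [← List.take_append_drop k l]
  rw [List.filter_append, hdrop, List.append_nil]
  exact List.filter_sublist

lemma sum_take_succ_getElem_nonzeroIndices (hk : k < (nonzeroIndices l).length) :
    (l.take ((nonzeroIndices l)[k] + 1)).sum = ((posPart l).take (k + 1)).sum := by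
  rw [sum_take_eq_sum_nonzeroIndices, filter_lt_succ_getElem (sortedLT_nonzeroIndices l) hk,
    posPart_eq_map_entry, List.map_take]

lemma sum_take_le_sum_take_posPart (hk : k < (nonzeroIndices l).length) {N : ℕ}
    (hN : N ≤ (nonzeroIndices l)[k]) : (l.take N).sum ≤ ((posPart l).take k).sum := by
  rw [sum_take_eq_sum_nonzeroIndices, posPart_eq_map_entry, ← List.map_take]
  exact ((filter_lt_sublist_take (sortedLT_nonzeroIndices l) hk hN).map _).sum_le_sum
    (fun _ _ => Nat.zero_le _)

end NonzeroEntries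

section Correspond

variable {α β : Type*}

def correspond [BEq α] [Inhabited β] (t : List α) (s : List β) (x : α) : β :=
  s.getD (t.idxOf x) default

variable [DecidableEq α] [Inhabited β] {t : List α} {s : List β} {x : α}

lemma correspond_eq_getElem (hl : t.length = s.length) (hx : x ∈ t) :
    correspond t s x = s[t.idxOf x]'(hl ▸ List.idxOf_lt_length_of_mem hx) :=
  List.getD_eq_getElem s _ _

lemma correspond_mem (hl : t.length = s.length) (hx : x ∈ t) : correspond t s x ∈ s := by
  rw [correspond_eq_getElem hl hx]
  exact List.getElem_mem _

lemma correspond_getElem (ht : t.Nodup) (hl : t.length = s.length) {k : ℕ} (hk : k < t.length) :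
    correspond t s t[k] = s[k]'(hl ▸ hk) := by
  rw [correspond, ht.idxOf_getElem k hk, List.getD_eq_getElem]

lemma apply_correspond {γ : Type*} {f : α → γ} {g : β → γ} (hv : t.map f = s.map g)
    (hx : x ∈ t) : g (correspond t s x) = f x := by
  have hl : t.length = s.length := by simpa using congrArg List.length hv
  have hk := List.idxOf_lt_length_of_mem hx
  have := List.getElem_of_eq hv (i := t.idxOf x) (by simpa using hk)
  rw [correspond_eq_getElem hl hx]
  simpa [List.getElem_idxOf] using this.symm

lemma correspond_correspond [DecidableEq β] [Inhabited α] (hs : s.Nodup)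
    (hl : t.length = s.length) (hx : x ∈ t) : correspond s t (correspond t s x) = x := by
  rw [correspond_eq_getElem hl hx, correspond_getElem hs hl.symm, List.getElem_idxOf]

lemma map_correspond (ht : t.Nodup) (hl : t.length = s.length) : t.map (correspond t s) = s :=
  List.ext_getElem (by simpa using hl) fun _ h _ => by
    simpa using correspond_getElem ht hl (by simpa using h)

lemma correspond_map_apply {φ : α → β} (hx : x ∈ t) : correspond t (t.map φ) x = φ x := by
  rw [correspond_eq_getElem (by simp) hx]
  simp [List.getElem_idxOf]

lemma correspond_map_self [DecidableEq β] [Inhabited α] {φ : α → β} (hφ : (t.map φ).Nodup)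
    (hx : x ∈ t) : correspond (t.map φ) t (φ x) = x := by
  rw [← correspond_map_apply (φ := φ) hx, correspond_correspond hφ (by simp) hx]

end Correspond

lemma correspond_lt_correspond {α β : Type*} [LinearOrder α] [LinearOrder β] [Inhabited β]
    {t : List α} {s : List β} {x y : α} (ht : t.SortedLT) (hs : s.SortedLT)
    (hl : t.length = s.length) (hx : x ∈ t) (hy : y ∈ t) (hxy : x < y) :
    correspond t s x < correspond t s y := by
  rw [correspond_eq_getElem hl hx, correspond_eq_getElem hl hy, hs.getElem_lt_getElem_iff,
    ← ht.getElem_lt_getElem_iff (hi := List.idxOf_lt_length_of_mem hx)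
      (hj := List.idxOf_lt_length_of_mem hy), List.getElem_idxOf, List.getElem_idxOf]
  exact hxy

section RowMatch

/-- Sends the `k`-th nonempty row of `c` to the `k`-th nonempty row of `d`. Rows are numbered from
`1` but list indices from `0`; rows outside the shape go to the empty row `0`. -/
def rowMatch (c d : List ℕ) (i : ℕ) : ℕ :=
  if 1 ≤ i ∧ i - 1 ∈ nonzeroIndices c then
    correspond (nonzeroIndices c) (nonzeroIndices d) (i - 1) + 1
  else 0

def pullRows (σ : ℕ → ℕ) (F : SVF) : SVF := fun i j => F (σ i) j

variable {c d : List ℕ} {i i' j : ℕ}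

lemma SBox.col_one (h : SBox c i j) : SBox c i 1 :=
  ⟨h.1, h.2.1, le_rfl, h.2.2.1.trans h.2.2.2⟩

lemma shapeLen_eq_entry (c : List ℕ) (i : ℕ) : shapeLen c i = entry c (i - 1) := rfl

lemma sBox_one_iff : SBox c i 1 ↔ 1 ≤ i ∧ i - 1 ∈ nonzeroIndices c := by
  rw [mem_nonzeroIndices]
  simp only [SBox, shapeLen_eq_entry]
  omega

lemma sBox_succ_one_of_mem (hx : i ∈ nonzeroIndices c) : SBox c (i + 1) 1 :=
  sBox_one_iff.mpr ⟨by omega, by simpa using hx⟩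

lemma mem_skyline {p : ℕ × ℕ} : p ∈ skyline c ↔ SBox c p.1 p.2 := by
  obtain ⟨x, y⟩ := p
  simp only [skyline, Finset.mem_biUnion, Finset.mem_range, Finset.mem_image, Prod.mk.injEq,
    SBox, shapeLen_eq_entry, entry]
  constructor
  · rintro ⟨i, hi, j, hj, rfl, rfl⟩
    simp only [Nat.add_sub_cancel]
    omega
  · rintro ⟨h1, h2, h3, h4⟩
    exact ⟨x - 1, by omega, y - 1, by omega, by omega, by omega⟩

lemma rowMatch_of_sBox (h : SBox c i 1) :
    rowMatch c d i = correspond (nonzeroIndices c) (nonzeroIndices d) (i - 1) + 1 :=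
  if_pos (sBox_one_iff.mp h)

lemma rowMatch_of_not_sBox (h : ¬ SBox c i 1) : rowMatch c d i = 0 :=
  if_neg (mt sBox_one_iff.mpr h)

lemma not_sBox_zero (c : List ℕ) (j : ℕ) : ¬ SBox c 0 j := fun h => by simpa using h.1

variable (hpp : posPart c = posPart d)
include hpp

lemma map_entry_nonzeroIndices_eq :
    (nonzeroIndices c).map (entry c) = (nonzeroIndices d).map (entry d) := by
  rw [← posPart_eq_map_entry, ← posPart_eq_map_entry, hpp]

lemma length_nonzeroIndices_eq : (nonzeroIndices c).length = (nonzeroIndices d).length := by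
  simpa using congrArg List.length (map_entry_nonzeroIndices_eq hpp)

lemma sBox_rowMatch_one (h : SBox c i 1) : SBox d (rowMatch c d i) 1 := by
  rw [rowMatch_of_sBox h]
  exact sBox_succ_one_of_mem
    (correspond_mem (length_nonzeroIndices_eq hpp) (sBox_one_iff.mp h).2)

lemma shapeLen_rowMatch (h : SBox c i 1) : shapeLen d (rowMatch c d i) = shapeLen c i := by
  rw [rowMatch_of_sBox h, shapeLen_eq_entry, shapeLen_eq_entry, Nat.add_sub_cancel]
  exact apply_correspond (map_entry_nonzeroIndices_eq hpp) (sBox_one_iff.mp h).2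

lemma sBox_rowMatch_iff (i j : ℕ) : SBox d (rowMatch c d i) j ↔ SBox c i j := by
  by_cases h : SBox c i 1
  · have hb := sBox_rowMatch_one hpp h
    have hs := shapeLen_rowMatch hpp h
    exact ⟨fun hj => ⟨h.1, h.2.1, hj.2.2.1, hs ▸ hj.2.2.2⟩,
      fun hj => ⟨hb.1, hb.2.1, hj.2.2.1, hs.symm ▸ hj.2.2.2⟩⟩
  · rw [rowMatch_of_not_sBox h]
    exact iff_of_false (not_sBox_zero d j) (mt SBox.col_one h)

lemma rowMatch_lt_rowMatch (h : SBox c i 1) (h' : SBox c i' 1) (hii : i < i') :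
    rowMatch c d i < rowMatch c d i' := by
  rw [rowMatch_of_sBox h, rowMatch_of_sBox h', Nat.add_lt_add_iff_right]
  exact correspond_lt_correspond (sortedLT_nonzeroIndices c) (sortedLT_nonzeroIndices d)
    (length_nonzeroIndices_eq hpp) (sBox_one_iff.mp h).2 (sBox_one_iff.mp h').2
    (by have := h.1; omega)

lemma rowMatch_rowMatch (h : SBox c i 1) : rowMatch d c (rowMatch c d i) = i := by
  rw [rowMatch_of_sBox (sBox_rowMatch_one hpp h), rowMatch_of_sBox h, Nat.add_sub_cancel,
    correspond_correspond (sortedLT_nonzeroIndices d).nodup (length_nonzeroIndices_eq hpp)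
      (sBox_one_iff.mp h).2]
  have := h.1
  omega

lemma rowOK_pullRows_iff {G : SVF} (v : ℕ) :
    RowOK c (pullRows (rowMatch c d) G) i j v ↔ RowOK d G (rowMatch c d i) j v := by
  simp only [RowOK, sBox_rowMatch_iff hpp]
  rfl

lemma SVSSF.pullRows {G : SVF} (hG : SVSSF d G) : SVSSF c (pullRows (rowMatch c d) G) := by
  obtain ⟨hne, hpos, hcol, hrow, htripA, htripB, hfree⟩ := hG
  have hbox : ∀ i j, SBox c i j ↔ SBox d (rowMatch c d i) j :=
    fun i j => (sBox_rowMatch_iff hpp i j).symm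
  have hmono {i i' j j'} (h : SBox c i j) (h' : SBox c i' j') (hii : i < i') :=
    rowMatch_lt_rowMatch hpp h.col_one h'.col_one hii
  refine ⟨fun i j => (hne _ j).trans (hbox i j).symm, fun i j => hpos _ j, ?_, ?_, ?_, ?_, ?_⟩
  · intro j i i' hii v hv hv'
    have b := (hbox i j).mpr ((hne _ j).mp ⟨v, hv⟩)
    have b' := (hbox i' j).mpr ((hne _ j).mp ⟨v, hv'⟩)
    refine hcol j _ _ ?_ v hv hv'
    rcases hii.lt_or_gt with hlt | hlt
    · exact (hmono b b' hlt).ne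
    · exact (hmono b' b hlt).ne'
  · exact fun i j h h1 => hrow _ j ((hbox i j).mp h) ((hbox i (j + 1)).mp h1)
  · intro i i' j hii h1 h2 h3 hsh
    refine htripA _ _ j (hmono h1 h3 hii) ((hbox _ _).mp h1) ((hbox _ _).mp h2)
      ((hbox _ _).mp h3) ?_
    rwa [shapeLen_rowMatch hpp h1.col_one, shapeLen_rowMatch hpp h3.col_one]
  · intro i i' j hii h1 h2 h3 hsh
    refine htripB _ _ j (hmono h3 h1 hii) ((hbox _ _).mp h1) ((hbox _ _).mp h2)
      ((hbox _ _).mp h3) ?_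
    rwa [shapeLen_rowMatch hpp h1.col_one, shapeLen_rowMatch hpp h3.col_one]
  · intro i j v h hv hvne i' h' hlt hvlt hR
    exact hfree _ j v ((hbox i j).mp h) hv hvne _ ((hbox i' j).mp h') hlt hvlt
      ((rowOK_pullRows_iff hpp v).mp hR)

lemma pullRows_pullRows {G : SVF} (hG : ∀ i j, (G i j).Nonempty ↔ SBox d i j) :
    pullRows (rowMatch d c) (pullRows (rowMatch c d) G) = G := by
  have hempty {i j} (h : ¬ SBox d i j) : G i j = ∅ :=
    Finset.not_nonempty_iff_eq_empty.mp (mt (hG i j).mp h)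
  funext i j
  by_cases h : SBox d i 1
  · exact congrArg (G · j) (rowMatch_rowMatch hpp.symm h)
  · change G (rowMatch c d (rowMatch d c i)) j = G i j
    rw [rowMatch_of_not_sBox h, rowMatch_of_not_sBox (not_sBox_zero c 1),
      hempty (not_sBox_zero d j), hempty (mt SBox.col_one h)]

lemma mem_skyline_rowMatch {p : ℕ × ℕ} : (rowMatch c d p.1, p.2) ∈ skyline d ↔ p ∈ skyline c := by
  rw [mem_skyline, mem_skyline, sBox_rowMatch_iff hpp]

lemma wtF_pullRows {G : SVF} (v : ℕ) : wtF c (pullRows (rowMatch c d) G) v = wtF d G v := by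
  refine Finset.card_nbij' (fun p => (rowMatch c d p.1, p.2)) (fun q => (rowMatch d c q.1, q.2))
    ?_ ?_ ?_ ?_
  · intro p hp
    simp only [Finset.mem_coe, Finset.mem_filter] at hp ⊢
    exact ⟨(mem_skyline_rowMatch hpp).mpr hp.1, hp.2⟩
  · intro q hq
    simp only [Finset.mem_coe, Finset.mem_filter] at hq ⊢
    refine ⟨(mem_skyline_rowMatch hpp.symm).mpr hq.1, ?_⟩
    change v ∈ G (rowMatch c d (rowMatch d c q.1)) q.2
    rw [rowMatch_rowMatch hpp.symm (mem_skyline.mp hq.1).col_one]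
    exact hq.2
  · intro p hp
    simp only [Finset.mem_coe, Finset.mem_filter] at hp
    exact Prod.ext (rowMatch_rowMatch hpp (mem_skyline.mp hp.1).col_one) rfl
  · intro q hq
    simp only [Finset.mem_coe, Finset.mem_filter] at hq
    exact Prod.ext (rowMatch_rowMatch hpp.symm (mem_skyline.mp hq.1).col_one) rfl

lemma sizeF_pullRows {G : SVF} : sizeF c (pullRows (rowMatch c d) G) = sizeF d G := by
  refine Finset.sum_nbij' (fun p => (rowMatch c d p.1, p.2)) (fun q => (rowMatch d c q.1, q.2))
    (fun p hp => (mem_skyline_rowMatch hpp).mpr hp)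
    (fun q hq => (mem_skyline_rowMatch hpp.symm).mpr hq)
    (fun p hp => Prod.ext (rowMatch_rowMatch hpp (mem_skyline.mp hp).col_one) rfl)
    (fun q hq => Prod.ext (rowMatch_rowMatch hpp.symm (mem_skyline.mp hq).col_one) rfl)
    (fun _ _ => rfl)

end RowMatch

lemma SVSSF.anc_pos {b : List ℕ} {F : SVF} (hF : SVSSF b F) {i j : ℕ} (h : SBox b i j) :
    0 < anc F i j := by
  obtain ⟨v, hv⟩ := (hF.1 i j).mpr h
  exact (hF.2.1 i j v hv).trans_le (Finset.le_sup (f := id) hv)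

section TargetShape

variable (a : List ℕ) (F : SVF)

def anchorIndex (x : ℕ) : ℕ := anc F (x + 1) 1 - 1

def targetIndices : List ℕ := (nonzeroIndices a).map (anchorIndex F)

/-- Row `x + 1` of `a` moves to row `anchorIndex F x + 1 = anc F (x + 1) 1`. -/
def targetShape : List ℕ :=
  List.ofFn fun k : Fin a.length =>
    if (k : ℕ) ∈ targetIndices a F then
      entry a (correspond (targetIndices a F) (nonzeroIndices a) k)
    else 0

variable {a F}

lemma length_targetShape : (targetShape a F).length = a.length := by simp [targetShape]

variable (hQ : QLSSF a F)
include hQ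

lemma anchorIndex_lt_anchorIndex {x y : ℕ} (hx : x ∈ nonzeroIndices a) (hy : y ∈ nonzeroIndices a)
    (hxy : x < y) : anchorIndex F x < anchorIndex F y := by
  have := hQ.2.2 (x + 1) (y + 1) (sBox_succ_one_of_mem hx) (sBox_succ_one_of_mem hy) (by omega)
  have := hQ.1.anc_pos (sBox_succ_one_of_mem hx)
  unfold anchorIndex
  omega

lemma anchorIndex_le {x : ℕ} (hx : x ∈ nonzeroIndices a) : anchorIndex F x ≤ x := by
  have := hQ.2.1 (x + 1) (sBox_succ_one_of_mem hx)
  unfold anchorIndex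
  omega

lemma sortedLT_targetIndices : (targetIndices a F).SortedLT := by
  rw [targetIndices, List.sortedLT_iff_pairwise, List.pairwise_map]
  exact (sortedLT_nonzeroIndices a).pairwise.imp_of_mem
    fun hx hy => anchorIndex_lt_anchorIndex hQ hx hy

lemma lt_length_of_mem_targetIndices {k : ℕ} (hk : k ∈ targetIndices a F) : k < a.length := by
  obtain ⟨x, hx, rfl⟩ := List.mem_map.mp hk
  exact (anchorIndex_le hQ hx).trans_lt (mem_nonzeroIndices.mp hx).1

lemma entry_targetShape (k : ℕ) :
    entry (targetShape a F) k = if k ∈ targetIndices a F then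
      entry a (correspond (targetIndices a F) (nonzeroIndices a) k) else 0 := by
  rcases Nat.lt_or_ge k a.length with h | h
  · rw [entry_eq_getElem (by rwa [length_targetShape])]
    simp [targetShape]
  · rw [entry, List.getD_eq_default _ 0 (by rwa [length_targetShape]), if_neg]
    exact fun hk => (lt_length_of_mem_targetIndices hQ hk).not_ge h

lemma entry_targetShape_anchorIndex {x : ℕ} (hx : x ∈ nonzeroIndices a) :
    entry (targetShape a F) (anchorIndex F x) = entry a x := by
  have hmem : anchorIndex F x ∈ targetIndices a F := List.mem_map_of_mem hx
  rw [entry_targetShape hQ, if_pos hmem, targetIndices,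
    correspond_map_self (sortedLT_targetIndices hQ).nodup hx]

lemma nonzeroIndices_targetShape : nonzeroIndices (targetShape a F) = targetIndices a F := by
  refine (sortedLT_nonzeroIndices _).eq_of_mem_iff (sortedLT_targetIndices hQ) fun k => ?_
  rw [mem_nonzeroIndices, length_targetShape]
  constructor
  · rintro ⟨-, hk⟩
    by_contra hk'
    rw [entry_targetShape hQ, if_neg hk'] at hk
    exact hk rfl
  · intro hk
    refine ⟨lt_length_of_mem_targetIndices hQ hk, ?_⟩
    obtain ⟨x, hx, rfl⟩ := List.mem_map.mp hk
    rw [entry_targetShape_anchorIndex hQ hx]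
    exact (mem_nonzeroIndices.mp hx).2

lemma posPart_targetShape : posPart (targetShape a F) = posPart a := by
  rw [posPart_eq_map_entry, posPart_eq_map_entry, nonzeroIndices_targetShape hQ, targetIndices,
    List.map_map]
  exact List.map_congr_left fun x hx => entry_targetShape_anchorIndex hQ hx

lemma dominates_targetShape : Dominates (targetShape a F) a := by
  refine ⟨length_targetShape, fun N => ?_⟩
  set moved := (nonzeroIndices a).filter fun x => anchorIndex F x < N
  have hsub : (nonzeroIndices a).filter (· < N) = moved.filter (· < N) := by
    rw [List.filter_filter]
    refine List.filter_congr fun x hx => ?_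
    have := anchorIndex_le hQ hx
    by_cases h : x < N <;> simp [h]
    omega
  calc (a.take N).sum = ((moved.filter (· < N)).map (entry a)).sum := by
        rw [sum_take_eq_sum_nonzeroIndices, hsub]
    _ ≤ (moved.map (entry a)).sum :=
        (List.filter_sublist.map _).sum_le_sum fun _ _ => Nat.zero_le _
    _ = ((targetShape a F).take N).sum := by
        rw [sum_take_eq_sum_nonzeroIndices, nonzeroIndices_targetShape hQ, targetIndices,
          List.filter_map, List.map_map]
        exact congrArg List.sum (List.map_congr_left fun x hx =>
          (entry_targetShape_anchorIndex hQ (List.mem_of_mem_filter hx)).symm)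

lemma LASSF_pullRows_targetShape :
    LASSF (targetShape a F) (pullRows (rowMatch (targetShape a F) a) F) := by
  refine ⟨hQ.1.pullRows (posPart_targetShape hQ), fun i h => ?_⟩
  have hi := sBox_one_iff.mp h
  rw [nonzeroIndices_targetShape hQ] at hi
  obtain ⟨x, hx, hxi⟩ := List.mem_map.mp hi.2
  change anc F (rowMatch (targetShape a F) a i) 1 = i
  rw [rowMatch_of_sBox h, nonzeroIndices_targetShape hQ, ← hxi, targetIndices,
    correspond_map_self (sortedLT_targetIndices hQ).nodup hx]
  have := hQ.1.anc_pos (sBox_succ_one_of_mem hx)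
  unfold anchorIndex at hxi
  omega

end TargetShape

section Inverse

variable {a b : List ℕ} {G : SVF}

lemma correspond_le_of_dominates (hDom : Dominates b a) (hpp : posPart b = posPart a) {x : ℕ}
    (hx : x ∈ nonzeroIndices a) : correspond (nonzeroIndices a) (nonzeroIndices b) x ≤ x := by
  have hl := length_nonzeroIndices_eq hpp.symm
  obtain ⟨k, hk, rfl⟩ := List.getElem_of_mem hx
  rw [correspond_getElem (sortedLT_nonzeroIndices a).nodup hl]
  by_contra! hlt
  have hprefix_a := sum_take_succ_getElem_nonzeroIndices hk
  have hprefix_b := sum_take_le_sum_take_posPart (hl ▸ hk) (N := (nonzeroIndices a)[k] + 1) hlt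
  have hlen : k < (posPart a).length := by simpa [posPart_eq_map_entry] using hk
  have hlast : (posPart a)[k] = entry a (nonzeroIndices a)[k] := by
    rw [List.getElem_of_eq (posPart_eq_map_entry a), List.getElem_map]
  rw [List.sum_take_succ _ _ hlen, hlast] at hprefix_a
  rw [hpp] at hprefix_b
  have := hDom.2 ((nonzeroIndices a)[k] + 1)
  have := (mem_nonzeroIndices.mp hx).2
  omega

lemma LASSF.QLSSF_pullRows (hL : LASSF b G) (hDom : Dominates b a)
    (hpp : posPart b = posPart a) : QLSSF a (pullRows (rowMatch a b) G) := by
  refine ⟨hL.1.pullRows hpp.symm, fun i h => ?_, fun i i' h h' hii => ?_⟩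
  · change anc G (rowMatch a b i) 1 ≤ i
    rw [hL.2 _ (sBox_rowMatch_one hpp.symm h), rowMatch_of_sBox h]
    have := correspond_le_of_dominates hDom hpp (sBox_one_iff.mp h).2
    have := h.1
    omega
  · change anc G (rowMatch a b i) 1 < anc G (rowMatch a b i') 1
    rw [hL.2 _ (sBox_rowMatch_one hpp.symm h), hL.2 _ (sBox_rowMatch_one hpp.symm h')]
    exact rowMatch_lt_rowMatch hpp.symm h h' hii

lemma targetShape_pullRows (hL : LASSF b G) (hDom : Dominates b a)
    (hpp : posPart b = posPart a) : targetShape a (pullRows (rowMatch a b) G) = b := by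
  have hanchor : ∀ x ∈ nonzeroIndices a, anchorIndex (pullRows (rowMatch a b) G) x =
      correspond (nonzeroIndices a) (nonzeroIndices b) x := by
    intro x hx
    have h := sBox_succ_one_of_mem hx
    change anc G (rowMatch a b (x + 1)) 1 - 1 = _
    rw [hL.2 _ (sBox_rowMatch_one hpp.symm h), rowMatch_of_sBox h]
    rfl
  have htarget : targetIndices a (pullRows (rowMatch a b) G) = nonzeroIndices b := by
    rw [targetIndices, List.map_congr_left hanchor]
    exact map_correspond (sortedLT_nonzeroIndices a).nodup (length_nonzeroIndices_eq hpp.symm)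
  refine List.ext_getElem (by rw [length_targetShape, hDom.1]) fun n h1 h2 => ?_
  rw [← entry_eq_getElem h1, ← entry_eq_getElem h2,
    entry_targetShape (hL.QLSSF_pullRows hDom hpp), htarget]
  split_ifs with hn
  · exact apply_correspond (map_entry_nonzeroIndices_eq hpp) hn
  · rw [mem_nonzeroIndices] at hn
    omega

end Inverse

section Finiteness

lemma infv_le_anc {F : SVF} {i j : ℕ} (hne : (F i j).Nonempty) : infv F i j ≤ anc F i j := by
  have hmem : sInf (F i j : Set ℕ) ∈ (F i j : Set ℕ) := Nat.sInf_mem (by exact_mod_cast hne)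
  exact Finset.le_sup (f := id) hmem

variable {b : List ℕ} {F : SVF}

lemma SVSSF.anc_le_row (hF : SVSSF b F) (h1 : ∀ i, SBox b i 1 → anc F i 1 ≤ i) :
    ∀ j i, SBox b i j → anc F i j ≤ i
  | 0, _, h => absurd h.2.2.1 (by omega)
  | 1, i, h => h1 i h
  | j + 2, i, h => by
    have hj : SBox b i (j + 1) := ⟨h.1, h.2.1, by omega, by have := h.2.2.2; omega⟩
    calc anc F i (j + 2) ≤ infv F i (j + 1) := hF.2.2.2.1 i (j + 1) hj h
      _ ≤ anc F i (j + 1) := infv_le_anc ((hF.1 i (j + 1)).mpr hj)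
      _ ≤ i := hF.anc_le_row h1 (j + 1) i hj

lemma SVSSF.le_length_of_mem (hF : SVSSF b F) (h1 : ∀ i, SBox b i 1 → anc F i 1 ≤ i)
    {i j v : ℕ} (hv : v ∈ F i j) : v ≤ b.length := by
  have hb : SBox b i j := (hF.1 i j).mp ⟨v, hv⟩
  calc v ≤ anc F i j := Finset.le_sup (f := id) hv
    _ ≤ i := hF.anc_le_row h1 j i hb
    _ ≤ b.length := hb.2.1

lemma finite_fillings_of_le (c : List ℕ) (n : ℕ) :
    {F : SVF | (∀ i j, (F i j).Nonempty ↔ SBox c i j) ∧ ∀ i j, ∀ v ∈ F i j, v ≤ n}.Finite := by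
  refine Set.Finite.of_finite_image (f := fun F (p : skyline c) => F p.1.1 p.1.2) ?_ ?_
  · refine (Set.Finite.pi (t := fun _ => {s : Finset ℕ | s ⊆ Finset.range (n + 1)})
      fun _ => ?_).subset ?_
    · exact (Finset.range (n + 1)).powerset.finite_toSet.subset fun _ hs =>
        Finset.mem_coe.mpr (Finset.mem_powerset.mpr hs)
    · rintro _ ⟨F, ⟨-, hle⟩, rfl⟩ p -
      exact fun v hv => Finset.mem_range_succ_iff.mpr (hle _ _ v hv)
  · intro F hF G hG hFG
    have hempty {H : SVF} (hH : ∀ i j, (H i j).Nonempty ↔ SBox c i j) {i j : ℕ}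
        (h : ¬ SBox c i j) : H i j = ∅ :=
      Finset.not_nonempty_iff_eq_empty.mp (mt (hH i j).mp h)
    funext i j
    by_cases h : SBox c i j
    · exact congrFun hFG ⟨(i, j), mem_skyline.mpr h⟩
    · rw [hempty hF.1 h, hempty hG.1 h]

lemma finite_LASSF (c : List ℕ) : {F : SVF | LASSF c F}.Finite :=
  (finite_fillings_of_le c c.length).subset fun _ hF =>
    ⟨hF.1.1, fun _ _ _ hv => hF.1.le_length_of_mem (fun i h => (hF.2 i h).le) hv⟩

lemma finite_lists_length_eq_le (n m : ℕ) :
    {l : List ℕ | l.length = n ∧ ∀ x ∈ l, x ≤ m}.Finite := by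
  refine ((List.finite_length_eq (Fin (m + 1)) n).image (List.map Fin.val)).subset ?_
  rintro l ⟨hl, hle⟩
  refine ⟨l.pmap (fun x hx => ⟨x, Nat.lt_succ_of_le hx⟩) hle, by simpa using hl, ?_⟩
  simp [List.map_pmap]

lemma finite_dominating_samePosPart (a : List ℕ) :
    {b : List ℕ | Dominates b a ∧ posPart b = posPart a}.Finite :=
  (finite_lists_length_eq_le a.length a.sum).subset fun b ⟨hDom, hpp⟩ =>
    ⟨hDom.1, fun _ hx => by
      rw [← sum_posPart a, ← hpp, sum_posPart]
      exact List.le_sum_of_mem hx⟩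

end Finiteness

section GeneratingFunction

lemma finsum_mem_finsum_mem_eq_finsum_mem_pairs {α β M : Type*} [AddCommMonoid M] {B : Set α}
    {S : α → Set β} (hB : B.Finite) (hS : ∀ b ∈ B, (S b).Finite) (f : α → β → M) :
    ∑ᶠ b ∈ B, ∑ᶠ x ∈ S b, f b x = ∑ᶠ p ∈ {p : α × β | p.1 ∈ B ∧ p.2 ∈ S p.1}, f p.1 p.2 := by
  have hunion : {p : α × β | p.1 ∈ B ∧ p.2 ∈ S p.1} = ⋃ b ∈ B, Prod.mk b '' S b := by
    ext ⟨b, x⟩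
    simp [and_comm]
  have hdisj : B.PairwiseDisjoint fun b => Prod.mk b '' S b := by
    intro b _ b' _ hne
    refine Set.disjoint_left.mpr ?_
    rintro _ ⟨x, -, rfl⟩ ⟨x', -, h⟩
    exact hne (congrArg Prod.fst h).symm
  rw [hunion, finsum_mem_biUnion hdisj hB fun b hb => (hS b hb).image _]
  exact finsum_mem_congr rfl fun b _ => (finsum_mem_image (f := fun p : α × β => f p.1 p.2)
    (Prod.mk_right_injective b).injOn).symm

noncomputable def fillingTerm (b : List ℕ) (F : SVF) : MvPolynomial ℕ (Polynomial ℤ) :=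
  MvPolynomial.C (Polynomial.X ^ (sizeF b F - b.sum)) * vmono (wtF b F)

lemma quasiLascoux_eq_finsum_mem (a : List ℕ) :
    quasiLascoux a = ∑ᶠ p ∈ {p : List ℕ × SVF |
      Dominates p.1 a ∧ posPart p.1 = posPart a ∧ LASSF p.1 p.2}, fillingTerm p.1 p.2 := by
  refine (finsum_mem_finsum_mem_eq_finsum_mem_pairs (finite_dominating_samePosPart a)
    (fun b _ => finite_LASSF b) fillingTerm).trans ?_
  simp only [Set.mem_ofPred_eq, and_assoc]

def qlssfEquiv (a : List ℕ) : {F : SVF // QLSSF a F} ≃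
    {p : List ℕ × SVF // Dominates p.1 a ∧ posPart p.1 = posPart a ∧ LASSF p.1 p.2} where
  toFun F := ⟨(targetShape a F, pullRows (rowMatch (targetShape a F) a) F),
    dominates_targetShape F.2, posPart_targetShape F.2, LASSF_pullRows_targetShape F.2⟩
  invFun p := ⟨pullRows (rowMatch a p.1.1) p.1.2, p.2.2.2.QLSSF_pullRows p.2.1 p.2.2.1⟩
  left_inv F := Subtype.ext (pullRows_pullRows (posPart_targetShape F.2) F.2.1.1)
  right_inv := by
    rintro ⟨⟨b, G⟩, hDom, hpp, hL⟩
    refine Subtype.ext (Prod.ext (targetShape_pullRows hL hDom hpp) ?_)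
    change pullRows (rowMatch (targetShape a _) a) (pullRows (rowMatch a b) G) = G
    rw [targetShape_pullRows hL hDom hpp]
    exact pullRows_pullRows hpp.symm hL.1.1

variable {a : List ℕ} (F : {F : SVF // QLSSF a F})

lemma wtF_qlssfEquiv (v : ℕ) : wtF (qlssfEquiv a F).1.1 (qlssfEquiv a F).1.2 v = wtF a F v :=
  wtF_pullRows (posPart_targetShape F.2) v

lemma sizeF_qlssfEquiv : sizeF (qlssfEquiv a F).1.1 (qlssfEquiv a F).1.2 = sizeF a F :=
  sizeF_pullRows (posPart_targetShape F.2)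

lemma fillingTerm_qlssfEquiv :
    fillingTerm (qlssfEquiv a F).1.1 (qlssfEquiv a F).1.2 = fillingTerm a F := by
  have hsum : (qlssfEquiv a F).1.1.sum = a.sum := by
    rw [← sum_posPart, (qlssfEquiv a F).2.2.1, sum_posPart]
  rw [fillingTerm, fillingTerm, hsum, sizeF_qlssfEquiv, funext (wtF_qlssfEquiv F)]

end GeneratingFunction

theorem stmt7 (a : List ℕ) :
    (∃ e : {F : SVF // QLSSF a F} ≃
        {p : List ℕ × SVF // Dominates p.1 a ∧ posPart p.1 = posPart a ∧ LASSF p.1 p.2},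
      ∀ F : {F : SVF // QLSSF a F},
        (∀ v, wtF (e F).1.1 (e F).1.2 v = wtF a F.1 v) ∧
          sizeF (e F).1.1 (e F).1.2 = sizeF a F.1) ∧
    quasiLascoux a = ∑ᶠ F ∈ {F : SVF | QLSSF a F},
      MvPolynomial.C (Polynomial.X ^ (sizeF a F - a.sum)) * vmono (wtF a F) := by
  refine ⟨⟨qlssfEquiv a, fun F => ⟨wtF_qlssfEquiv F, sizeF_qlssfEquiv F⟩⟩, ?_⟩
  calc quasiLascoux a
      = ∑ᶠ p : {p : List ℕ × SVF // Dominates p.1 a ∧ posPart p.1 = posPart a ∧ LASSF p.1 p.2},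
          fillingTerm p.1.1 p.1.2 := by
        rw [quasiLascoux_eq_finsum_mem, ← finsum_set_coe_eq_finsum_mem]
        rfl
    _ = ∑ᶠ F : {F : SVF // QLSSF a F}, fillingTerm (qlssfEquiv a F).1.1 (qlssfEquiv a F).1.2 :=
        (finsum_comp_equiv (qlssfEquiv a)).symm
    _ = ∑ᶠ F : {F : SVF // QLSSF a F}, fillingTerm a F := finsum_congr fillingTerm_qlssfEquiv
    _ = _ := finsum_set_coe_eq_finsum_mem {F | QLSSF a F}
end
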